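/- arXiv:2309.15997 — 3 statements merged into one kernel-verified Lean document; each statement's English description precedes it below -/
import Mathlib

section
/- Define the priority value function 𝒰_P(α) = ∫ U( min{ κ(1+α−ω), min{κ,q} }, ω) dΛ(ω) for α ≥ 0, and let Q* := (1+γ−E[ω])/(1/κ+γβ). Then α* := Q*/κ − 1 + E[ω] is nonnegative, α* maximizes 𝒰_P over [0, ∞), and the optimal priority value is V_P := 𝒰_P(α*) = q·E[ω] + (1+γ−E[ω])·Q* − (1/2)(1/κ+γβ)·Q*² + (κ/2)(1−κγβ)·Var[ω]. -/
/-!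
Write `c = 1/κ + γβ`. At `α*` the admitted measure is `x*(ω) = κ(1+α*−ω) = Q* + κ(E−ω)`, which
the first regularity condition keeps below the cap `min{κ,q}`. While the cap does not bind,
`U(κ(1+α−ω), ω) − U(x*(ω), ω) = κγβ·κ(α−α*)(ω−E) − (c/2)κ²(α−α*)²`; the linear term has mean
zero, so `𝒰_P(α) = 𝒰_P(α*) − (c/2)κ²(α−α*)²`. Beyond the priority `α₁` at which the cap starts
to bind at `ω̲`, the first regularity condition puts every admitted measure past the bliss point
`(1+γ−ω)/c` of the concave `U(·, ω)`, so raising `α` lowers the payoff state by state and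
`𝒰_P(α) ≤ 𝒰_P(α₁) ≤ 𝒰_P(α*)`. Expanding `U(x*(ω), ω)` in `ω − E` gives the value, and the
second regularity condition gives `α* ≥ 0`.
-/

open Set MeasureTheory

noncomputable def U (q κ γ β x ω : ℝ) : ℝ :=
  q * ω + (1 + γ - ω) * x - (1/2) * (1/κ + γ*β) * x^2

noncomputable def Emean (Λ : Measure ℝ) : ℝ := ∫ ω, ω ∂Λ

noncomputable def Vvar (Λ : Measure ℝ) : ℝ := ∫ ω, (ω - Emean Λ)^2 ∂Λ

/-- Value of the priority policy α, which admits the highest-scoring measure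
`min{κ(1+α−ω), min{κ,q}}` of minority students in state ω. -/
noncomputable def UP (q κ γ β : ℝ) (Λ : Measure ℝ) (α : ℝ) : ℝ :=
  ∫ ω, U q κ γ β (min (κ*(1+α-ω)) (min κ q)) ω ∂Λ

theorem Continuous.integrable_of_ae_mem_Icc {Λ : Measure ℝ} [IsFiniteMeasure Λ] {a b : ℝ}
    {f : ℝ → ℝ} (hf : Continuous f) (hae : ∀ᵐ ω ∂Λ, ω ∈ Icc a b) : Integrable f Λ := by
  rw [← Measure.restrict_eq_self_of_ae_mem hae]
  exact hf.integrableOn_Icc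

theorem Emean_mem_Icc {Λ : Measure ℝ} [IsProbabilityMeasure Λ] {a b : ℝ}
    (hae : ∀ᵐ ω ∂Λ, ω ∈ Icc a b) : Emean Λ ∈ Icc a b :=
  convex_Icc a b |>.integral_mem isClosed_Icc hae (continuous_id.integrable_of_ae_mem_Icc hae)

theorem integral_sub_Emean {Λ : Measure ℝ} [IsProbabilityMeasure Λ]
    (h : Integrable (fun ω => ω) Λ) : ∫ ω, (ω - Emean Λ) ∂Λ = 0 := by
  rw [integral_sub h (integrable_const _), integral_const]
  simp [Emean]

theorem U_le_of_bliss_le {q κ γ β x y ω : ℝ} (hc : 0 ≤ 1/κ + γ*β)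
    (hx : 1 + γ - ω ≤ (1/κ + γ*β) * x) (hxy : x ≤ y) :
    U q κ γ β y ω ≤ U q κ γ β x ω := by
  unfold U
  nlinarith [mul_nonneg (sub_nonneg.2 hxy) (sub_nonneg.2 hx),
    mul_nonneg (mul_nonneg hc (sub_nonneg.2 hxy)) (sub_nonneg.2 hxy)]

theorem one_div_add_mul_mul_cancel {κ : ℝ} (γ β : ℝ) (hκ : κ ≠ 0) :
    (1/κ + γ*β) * κ = 1 + κ*γ*β := by
  field_simp

theorem linear_policy_foc {κ γ β Q e : ℝ} (hκ : κ ≠ 0) (hQ : (1/κ + γ*β) * Q = 1 + γ - e) :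
    (1/κ + γ*β) * κ * (1 + (Q/κ - 1 + e)) = 1 + γ + κ*γ*β*e := by
  have hκQ : κ * (Q/κ) = Q := mul_div_cancel₀ Q hκ
  linear_combination hQ + e * one_div_add_mul_mul_cancel γ β hκ + (1/κ + γ*β) * hκQ

theorem U_linear_policy_shift {q κ γ β a e α ω : ℝ} (hκ : κ ≠ 0)
    (hfoc : (1/κ + γ*β) * κ * (1 + a) = 1 + γ + κ*γ*β*e) :
    U q κ γ β (κ*(1+α-ω)) ω
      = U q κ γ β (κ*(1+a-ω)) ω + κ*γ*β*(κ*(α-a))*(ω-e) - (1/κ + γ*β)/2*(κ*(α-a))^2 := by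
  unfold U
  linear_combination (-(κ*(α-a)))*hfoc + (κ*(α-a))*ω*one_div_add_mul_mul_cancel γ β hκ

theorem U_linear_policy_expand {q κ γ β Q e ω : ℝ} (hκ : κ ≠ 0) (hQ : (1/κ + γ*β) * Q = 1 + γ - e) :
    U q κ γ β (Q + κ*(e-ω)) ω
      = q*e + (1+γ-e)*Q - 1/2*(1/κ + γ*β)*Q^2 + (q-Q)*(ω-e) + κ/2*(1-κ*γ*β)*(ω-e)^2 := by
  unfold U
  linear_combination (κ*(ω-e))*hQ - κ/2*(ω-e)^2*one_div_add_mul_mul_cancel γ β hκ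

section

variable {q κ γ β ωl ωh : ℝ} {Λ : Measure ℝ}

theorem UP_eq_integral_of_uncapped (hae : ∀ᵐ ω ∂Λ, ω ∈ Icc ωl ωh) (hκ : 0 ≤ κ) {α : ℝ}
    (hα : κ*(1+α-ωl) ≤ min κ q) :
    UP q κ γ β Λ α = ∫ ω, U q κ γ β (κ*(1+α-ω)) ω ∂Λ := by
  refine integral_congr_ae (hae.mono fun ω hω => ?_)
  have : κ*(1+α-ω) ≤ min κ q := by nlinarith [hω.1]
  simp only [min_eq_left this]

variable [IsProbabilityMeasure Λ]

theorem integral_U_linear_policy_shift (hae : ∀ᵐ ω ∂Λ, ω ∈ Icc ωl ωh) (hκ : κ ≠ 0) {a : ℝ}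
    (hfoc : (1/κ + γ*β) * κ * (1 + a) = 1 + γ + κ*γ*β*Emean Λ) (α : ℝ) :
    ∫ ω, U q κ γ β (κ*(1+α-ω)) ω ∂Λ
      = ∫ ω, U q κ γ β (κ*(1+a-ω)) ω ∂Λ - (1/κ + γ*β)/2*(κ*(α-a))^2 := by
  have hid : Integrable (fun ω => ω) Λ := continuous_id.integrable_of_ae_mem_Icc hae
  have hUa : Integrable (fun ω => U q κ γ β (κ*(1+a-ω)) ω) Λ :=
    Continuous.integrable_of_ae_mem_Icc (by unfold U; fun_prop) hae
  have hlin : Integrable (fun ω => κ*γ*β*(κ*(α-a))*(ω - Emean Λ)) Λ :=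
    (hid.sub (integrable_const _)).const_mul _
  rw [integral_congr_ae (Filter.Eventually.of_forall fun ω => U_linear_policy_shift hκ hfoc),
    integral_sub _ (integrable_const _), integral_add hUa hlin,
    integral_const_mul, integral_sub_Emean hid]
  · simp
  · exact hUa.add hlin

theorem UP_le_of_uncapped (hae : ∀ᵐ ω ∂Λ, ω ∈ Icc ωl ωh) (hκ : 0 < κ) (hc : 0 ≤ 1/κ + γ*β)
    {αs α : ℝ} (hfoc : (1/κ + γ*β) * κ * (1 + αs) = 1 + γ + κ*γ*β*Emean Λ)
    (hαs : κ*(1+αs-ωl) ≤ min κ q) (hα : κ*(1+α-ωl) ≤ min κ q) :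
    UP q κ γ β Λ α ≤ UP q κ γ β Λ αs := by
  rw [UP_eq_integral_of_uncapped hae hκ.le hα, UP_eq_integral_of_uncapped hae hκ.le hαs,
    integral_U_linear_policy_shift hae hκ.ne' hfoc]
  have : 0 ≤ (1/κ + γ*β)/2*(κ*(α-αs))^2 := by positivity
  linarith

theorem UP_anti_of_bliss_le (hae : ∀ᵐ ω ∂Λ, ω ∈ Icc ωl ωh) (hκ : 0 ≤ κ) (hc : 0 ≤ 1/κ + γ*β)
    {α₁ α : ℝ} (hbliss : ∀ ω ∈ Icc ωl ωh, 1 + γ - ω ≤ (1/κ + γ*β) * min (κ*(1+α₁-ω)) (min κ q))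
    (h : α₁ ≤ α) : UP q κ γ β Λ α ≤ UP q κ γ β Λ α₁ := by
  refine integral_mono_ae (Continuous.integrable_of_ae_mem_Icc (by unfold U; fun_prop) hae)
    (Continuous.integrable_of_ae_mem_Icc (by unfold U; fun_prop) hae)
    (hae.mono fun ω hω => U_le_of_bliss_le hc (hbliss ω hω) ?_)
  gcongr

theorem UP_le_UP_opt (hae : ∀ᵐ ω ∂Λ, ω ∈ Icc ωl ωh) (hκ : 0 < κ) (hc : 0 ≤ 1/κ + γ*β)
    {αs : ℝ} (hfoc : (1/κ + γ*β) * κ * (1 + αs) = 1 + γ + κ*γ*β*Emean Λ)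
    (hαs : κ*(1+αs-ωl) ≤ min κ q)
    (hbliss : 1 + γ - ωl ≤ (1/κ + γ*β) * (min κ q - κ*(ωh-ωl))) (α : ℝ) :
    UP q κ γ β Λ α ≤ UP q κ γ β Λ αs := by
  obtain ⟨α₁, hα₁⟩ : ∃ α₁, κ*(1+α₁-ωl) = min κ q :=
    ⟨ωl + min κ q / κ - 1, by field_simp; ring⟩
  rcases le_total α α₁ with h | h
  · exact UP_le_of_uncapped hae hκ hc hfoc hαs (by nlinarith)
  refine (UP_anti_of_bliss_le hae hκ.le hc (fun ω hω => ?_) h).trans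
    (UP_le_of_uncapped hae hκ hc hfoc hαs hα₁.le)
  rw [min_eq_left (by nlinarith [hω.1])]
  nlinarith [hω.1, hω.2, mul_nonneg hc (mul_nonneg hκ.le (sub_nonneg.2 hω.2))]

theorem UP_opt_eq (hae : ∀ᵐ ω ∂Λ, ω ∈ Icc ωl ωh) (hκ : 0 < κ) {Q : ℝ}
    (hQ : (1/κ + γ*β) * Q = 1 + γ - Emean Λ) (hlin : κ*(1+(Q/κ-1+Emean Λ)-ωl) ≤ min κ q) :
    UP q κ γ β Λ (Q/κ - 1 + Emean Λ)
      = q * Emean Λ + (1 + γ - Emean Λ) * Q - (1/2) * (1/κ + γ*β) * Q^2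
        + (κ/2) * (1 - κ*γ*β) * Vvar Λ := by
  have hid : Integrable (fun ω => ω) Λ := continuous_id.integrable_of_ae_mem_Icc hae
  have hsub : Integrable (fun ω => ω - Emean Λ) Λ := hid.sub (integrable_const _)
  have hsq : Integrable (fun ω => (ω - Emean Λ)^2) Λ :=
    Continuous.integrable_of_ae_mem_Icc (by fun_prop) hae
  have hshift : ∀ ω, κ*(1+(Q/κ-1+Emean Λ)-ω) = Q + κ*(Emean Λ-ω) := fun ω => by field_simp; ring
  simp_rw [UP_eq_integral_of_uncapped hae hκ.le hlin, hshift, U_linear_policy_expand hκ.ne' hQ]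
  rw [integral_add _ (hsq.const_mul _), integral_add (integrable_const _) (hsub.const_mul _),
    integral_const_mul, integral_const_mul, integral_sub_Emean hid, Vvar]
  · simp
  · exact (integrable_const _).add (hsub.const_mul _)

end

theorem stmt_4_general (q κ γ β ωl ωh : ℝ)
    (hκ : 0 < κ) (hγ : 0 ≤ γ) (hβ : 0 ≤ β)
    (hreg1 : (1 + γ - ωl)/(1/κ + γ*β) + κ*(ωh - ωl) < min κ q)
    (hreg2 : κ*(1 - ωl) < (1 + γ - ωh)/(1/κ + γ*β))
    (Λ : Measure ℝ) [IsProbabilityMeasure Λ] (hsupp : Λ (Set.Icc ωl ωh)ᶜ = 0) :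
    0 ≤ (1 + γ - Emean Λ)/(1/κ + γ*β) / κ - 1 + Emean Λ ∧
    (∀ α : ℝ, 0 ≤ α →
      UP q κ γ β Λ α
        ≤ UP q κ γ β Λ ((1 + γ - Emean Λ)/(1/κ + γ*β) / κ - 1 + Emean Λ)) ∧
    UP q κ γ β Λ ((1 + γ - Emean Λ)/(1/κ + γ*β) / κ - 1 + Emean Λ)
      = q * Emean Λ + (1 + γ - Emean Λ) * ((1 + γ - Emean Λ)/(1/κ + γ*β))
        - (1/2) * (1/κ + γ*β) * ((1 + γ - Emean Λ)/(1/κ + γ*β))^2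
        + (κ/2) * (1 - κ*γ*β) * Vvar Λ := by
  have hae : ∀ᵐ ω ∂Λ, ω ∈ Icc ωl ωh := ae_iff.2 hsupp
  obtain ⟨hEl, hEh⟩ := Emean_mem_Icc hae
  set E := Emean Λ
  have hc : 0 < 1/κ + γ*β := by positivity
  set Q := (1 + γ - E)/(1/κ + γ*β)
  have hQ : (1/κ + γ*β) * Q = 1 + γ - E := mul_div_cancel₀ _ hc.ne'
  clear_value Q
  have hQl : Q ≤ (1 + γ - ωl)/(1/κ + γ*β) := by rw [le_div_iff₀' hc]; linarith
  have hQh : (1 + γ - ωh)/(1/κ + γ*β) ≤ Q := by rw [div_le_iff₀' hc]; linarith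
  have hlin : κ*(1 + (Q/κ - 1 + E) - ωl) ≤ min κ q := by
    have hκE : κ*(E - ωl) ≤ κ*(ωh - ωl) := by gcongr
    rw [show κ*(1 + (Q/κ - 1 + E) - ωl) = Q + κ*(E - ωl) by field_simp; ring]
    linarith
  have hbliss : 1 + γ - ωl ≤ (1/κ + γ*β) * (min κ q - κ*(ωh-ωl)) := by
    rw [← div_le_iff₀' hc]; linarith
  refine ⟨?_, fun α _ => UP_le_UP_opt hae hκ hc.le (linear_policy_foc hκ.ne' hQ) hlin hbliss α,
    UP_opt_eq hae hκ hQ hlin⟩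
  rw [show Q/κ - 1 + E = (Q - κ*(1 - E))/κ by field_simp; ring]
  have hκE : κ*(1 - E) ≤ κ*(1 - ωl) := by gcongr
  exact div_nonneg (by linarith) hκ.le

/-- With `Q* = (1+γ−E[ω])/(1/κ+γβ)`, the priority `α* = Q*/κ − 1 + E[ω]` is
nonnegative, maximizes the priority value over `[0,∞)`, and its value is
`q·E[ω] + (1+γ−E[ω])·Q* − (1/2)(1/κ+γβ)·Q*² + (κ/2)(1−κγβ)·Var[ω]`. -/
theorem stmt_4 (q κ γ β ωl ωh : ℝ)
    (hq0 : 0 < q) (hq1 : q ≤ 1) (hκ : 0 < κ) (hγ : 0 ≤ γ) (hβ : 0 ≤ β)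
    (hωl : 0 ≤ ωl) (hωlt : ωl < ωh) (hωh : ωh ≤ 1)
    (hreg1 : (1 + γ - ωl)/(1/κ + γ*β) + κ*(ωh - ωl) < min κ q)
    (hreg2 : κ*(1 - ωl) < (1 + γ - ωh)/(1/κ + γ*β))
    (Λ : Measure ℝ) [IsProbabilityMeasure Λ] (hsupp : Λ (Set.Icc ωl ωh)ᶜ = 0) :
    0 ≤ (1 + γ - Emean Λ)/(1/κ + γ*β) / κ - 1 + Emean Λ ∧
    (∀ α : ℝ, 0 ≤ α →
      UP q κ γ β Λ α
        ≤ UP q κ γ β Λ ((1 + γ - Emean Λ)/(1/κ + γ*β) / κ - 1 + Emean Λ)) ∧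
    UP q κ γ β Λ ((1 + γ - Emean Λ)/(1/κ + γ*β) / κ - 1 + Emean Λ)
      = q * Emean Λ + (1 + γ - Emean Λ) * ((1 + γ - Emean Λ)/(1/κ + γ*β))
        - (1/2) * (1/κ + γ*β) * ((1 + γ - Emean Λ)/(1/κ + γ*β))^2
        + (κ/2) * (1 - κ*γ*β) * Vvar Λ :=
  stmt_4_general q κ γ β ωl ωh hκ hγ hβ hreg1 hreg2 Λ hsupp
end

section
/- Define V_A := ∫ U(y_A(ω), ω) dΛ(ω), where for each ω, y_A(ω) is the unique y ∈ [0, min{κ,q}] solving y = min{κ(1 − max{ω − γ(1−βy), 0}), q}. Then V_A = V*, where V* = ∫ max_{x ∈ [0, min{κ,q}]} U(x, ω) dΛ(ω); that is, the adaptive priority mechanism A(y) = γ(1−βy) attains the first-best value. -/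
/-!
For fixed ω the payoff `U(·, ω)` is a concave quadratic whose vertex
`x* = (1 + γ - ω) / (1/κ + γβ)` lies in `[0, min κ q]` by the first regularity condition, so
`x*` is the first-best choice. Rewriting `(1/κ + γβ) x* = 1 + γ - ω` as
`x* = κ (1 - (ω - γ (1 - β x*)))` shows that `x*` is a fixed point of the adaptive priority
map, and that map is antitone in `y`, so its fixed point is unique and `y_A(ω) = x*`.
-/

open Set MeasureTheory

noncomputable def Vstar (q κ γ β : ℝ) (Λ : Measure ℝ) : ℝ :=
  ∫ ω, sSup ((fun x => U q κ γ β x ω) '' Set.Icc (0:ℝ) (min κ q)) ∂Λ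

theorem Antitone.eq_of_isFixedPt {α : Type*} [LinearOrder α] {f : α → α} (hf : Antitone f)
    {x y : α} (hx : f x = x) (hy : f y = y) : x = y := by
  rcases le_total x y with hxy | hyx
  · exact le_antisymm hxy (hy ▸ hx ▸ hf hxy)
  · exact le_antisymm (hx ▸ hy ▸ hf hyx) hyx

section Payoff

variable (q κ γ β : ℝ)

noncomputable def peakU (ω : ℝ) : ℝ := (1 + γ - ω) / (1/κ + γ*β)

def apmMap (ω y : ℝ) : ℝ := min (κ * (1 - max (ω - γ*(1 - β * y)) 0)) q

variable {q κ γ β}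

lemma mul_peakU (ha : 1/κ + γ*β ≠ 0) (ω : ℝ) : (1/κ + γ*β) * peakU κ γ β ω = 1 + γ - ω :=
  mul_div_cancel₀ _ ha

lemma U_peakU_sub_U (ha : 1/κ + γ*β ≠ 0) (ω x : ℝ) :
    U q κ γ β (peakU κ γ β ω) ω - U q κ γ β x ω
      = (1/2) * (1/κ + γ*β) * (peakU κ γ β ω - x)^2 := by
  unfold U
  linear_combination (x - peakU κ γ β ω) * mul_peakU ha ω

lemma isGreatest_image_U_peakU (ha : 0 < 1/κ + γ*β) {ω : ℝ} {s : Set ℝ}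
    (hs : peakU κ γ β ω ∈ s) :
    IsGreatest ((fun x => U q κ γ β x ω) '' s) (U q κ γ β (peakU κ γ β ω) ω) := by
  refine ⟨mem_image_of_mem _ hs, ?_⟩
  rintro _ ⟨x, -, rfl⟩
  have := U_peakU_sub_U (q := q) ha.ne' ω x
  dsimp only
  nlinarith [sq_nonneg (peakU κ γ β ω - x)]

lemma antitone_apmMap (hκ : 0 ≤ κ) (hγ : 0 ≤ γ) (hβ : 0 ≤ β) (ω : ℝ) :
    Antitone (apmMap q κ γ β ω) := by
  intro y z hyz
  unfold apmMap
  gcongr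

lemma apmMap_peakU (hκ : 0 < κ) (hγ : 0 ≤ γ) (hβ : 0 ≤ β) {ω : ℝ}
    (hpeak : peakU κ γ β ω ≤ min κ q) :
    apmMap q κ γ β ω (peakU κ γ β ω) = peakU κ γ β ω := by
  set x := peakU κ γ β ω
  have ha : 0 < 1/κ + γ*β := by positivity
  have hx := mul_peakU ha.ne' ω
  have hinner : ω - γ * (1 - β * x) = 1 - x / κ := by
    field_simp at hx ⊢
    linarith
  have hxκ : x / κ ≤ 1 := (div_le_one hκ).2 (hpeak.trans (min_le_left _ _))
  unfold apmMap
  rw [hinner, max_eq_left (by linarith), sub_sub_cancel, mul_div_cancel₀ _ hκ.ne',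
    min_eq_left (hpeak.trans (min_le_right _ _))]

lemma peakU_mem_Icc (hκ : 0 < κ) (hγ : 0 ≤ γ) (hβ : 0 ≤ β) {ωl ωh ω : ℝ} (hωlt : ωl ≤ ωh)
    (hωh : ωh ≤ 1) (hreg : (1 + γ - ωl)/(1/κ + γ*β) + κ*(ωh - ωl) < min κ q)
    (hω : ω ∈ Icc ωl ωh) : peakU κ γ β ω ∈ Icc 0 (min κ q) := by
  have ha : 0 < 1/κ + γ*β := by positivity
  constructor
  · exact div_nonneg (by linarith [hω.2]) ha.le
  · calc peakU κ γ β ω ≤ (1 + γ - ωl)/(1/κ + γ*β) := by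
          unfold peakU; gcongr; exact hω.1
      _ ≤ min κ q := by nlinarith

end Payoff

theorem stmt_9_general (q κ γ β ωl ωh : ℝ)
    (hκ : 0 < κ) (hγ : 0 ≤ γ) (hβ : 0 ≤ β)
    (hωlt : ωl < ωh) (hωh : ωh ≤ 1)
    (hreg1 : (1 + γ - ωl)/(1/κ + γ*β) + κ*(ωh - ωl) < min κ q)
    (Λ : Measure ℝ) (hsupp : Λ (Set.Icc ωl ωh)ᶜ = 0)
    (yA : ℝ → ℝ)
    (hyA : ∀ ω ∈ Set.Icc ωl ωh,
      yA ω ∈ Set.Icc (0:ℝ) (min κ q) ∧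
      yA ω = min (κ * (1 - max (ω - γ*(1 - β * yA ω)) 0)) q) :
    ∫ ω, U q κ γ β (yA ω) ω ∂Λ = Vstar q κ γ β Λ := by
  have ha : 0 < 1/κ + γ*β := by positivity
  have hpointwise : ∀ ω ∈ Icc ωl ωh, U q κ γ β (yA ω) ω
      = sSup ((fun x => U q κ γ β x ω) '' Icc 0 (min κ q)) := by
    intro ω hω
    have hpeak := peakU_mem_Icc hκ hγ hβ hωlt.le hωh hreg1 hω
    have hyA_eq : yA ω = peakU κ γ β ω :=
      (antitone_apmMap hκ.le hγ hβ ω).eq_of_isFixedPt (hyA ω hω).2.symm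
        (apmMap_peakU hκ hγ hβ hpeak.2)
    rw [hyA_eq, (isGreatest_image_U_peakU ha hpeak).csSup_eq]
  have hae : ∀ᵐ ω ∂Λ, ω ∈ Icc ωl ωh := ae_iff.2 hsupp
  exact integral_congr_ae (hae.mono hpointwise)

/-- If `y_A(ω)` is, for every ω ∈ [ω̲,ω̄], the (unique) y ∈ [0, min{κ,q}] solving
the APM fixed-point equation `y = min{κ(1 − max{ω − γ(1−βy), 0}), q}`, then
`V_A = ∫ U(y_A(ω), ω) dΛ(ω)` equals the first-best value V*: the adaptive
priority mechanism `A(y) = γ(1−βy)` attains the first-best. -/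
theorem stmt_9 (q κ γ β ωl ωh : ℝ)
    (hq0 : 0 < q) (hq1 : q ≤ 1) (hκ : 0 < κ) (hγ : 0 ≤ γ) (hβ : 0 ≤ β)
    (hωl : 0 ≤ ωl) (hωlt : ωl < ωh) (hωh : ωh ≤ 1)
    (hreg1 : (1 + γ - ωl)/(1/κ + γ*β) + κ*(ωh - ωl) < min κ q)
    (hreg2 : κ*(1 - ωl) < (1 + γ - ωh)/(1/κ + γ*β))
    (Λ : Measure ℝ) [IsProbabilityMeasure Λ] (hsupp : Λ (Set.Icc ωl ωh)ᶜ = 0)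
    (yA : ℝ → ℝ)
    (hyA : ∀ ω ∈ Set.Icc ωl ωh,
      yA ω ∈ Set.Icc (0:ℝ) (min κ q) ∧
      yA ω = min (κ * (1 - max (ω - γ*(1 - β * yA ω)) 0)) q) :
    ∫ ω, U q κ γ β (yA ω) ω ∂Λ = Vstar q κ γ β Λ :=
  stmt_9_general q κ γ β ωl ωh hκ hγ hβ hωlt hωh hreg1 Λ hsupp yA hyA
end

section
/- If S ⊆ Θ with |S| = q is implemented by the optimal APM A*, then S maximizes W among all subsets of Θ of cardinality q: for every S' ⊆ Θ with |S'| = q, W(S) ≥ W(S'). -/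
/-!
Exchange argument. Write `S' = T ∪ {b}`; replacing `b` by `a` changes `W` by the difference of
the marginal gains of `a` and `b` over `T`. If `S' ≠ S`, one can always find `a ∈ S \ S'` and
`b ∈ S' \ S` for which this does not decrease `W`: if no group is larger in `S'` than in `S`,
take `a`, `b` in the same group, where condition (i) and monotonicity of `h` decide; otherwise
take `b` from a group over-represented in `S'` and `a` from one under-represented in it, and
chain condition (ii) with the concavity of the `u_g`. Each such swap brings `S'` one element
closer to `S`.
-/

open Finset

/-- Number of agents from group `g` in `S`. -/
def xg {Θ M : Type*} [DecidableEq M] (m : Θ → M) (S : Finset Θ) (g : M) : ℕ :=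
  (S.filter (fun θ => m θ = g)).card

/-- The authority's payoff from admitting the set `S`:
`W(S) = Σ_{θ∈S} h(s(θ)) + Σ_{g} u_g(x_g(S))`. -/
noncomputable def W {Θ M : Type*} [Fintype M] [DecidableEq M]
    (h : ℝ → ℝ) (s : Θ → ℝ) (u : M → ℕ → ℝ) (m : Θ → M) (S : Finset Θ) : ℝ :=
  (∑ θ ∈ S, h (s θ)) + ∑ g : M, u g (xg m S g)

/-- `S` is implemented by the optimal APM `A*`. -/
def ImplementedByAPM {Θ M : Type*} [DecidableEq M]
    (h : ℝ → ℝ) (s : Θ → ℝ) (u : M → ℕ → ℝ) (m : Θ → M) (S : Finset Θ) : Prop :=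
  (∀ θ ∈ S, ∀ θ' : Θ, θ' ∉ S → m θ' = m θ → s θ' < s θ) ∧
  (∀ θ ∈ S, ∀ θ' : Θ, θ' ∉ S → m θ' ≠ m θ →
    h (s θ') + (u (m θ') (xg m S (m θ') + 1) - u (m θ') (xg m S (m θ'))) ≤
    h (s θ) + (u (m θ) (xg m S (m θ)) - u (m θ) (xg m S (m θ) - 1)))

section Exchange

variable {α β : Type*} [DecidableEq α]

lemma sdiff_insert_erase_eq {S S' : Finset α} {a b : α} (hbS : b ∉ S) :
    S \ insert a (S'.erase b) = (S \ S').erase a := by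
  ext x
  simp only [mem_sdiff, mem_insert, mem_erase]
  grind

lemma le_of_exchange [Preorder β] (f : Finset α → β) (S : Finset α)
    (hex : ∀ S' : Finset α, #S' = #S → S' ≠ S →
      ∃ a ∈ S \ S', ∃ b ∈ S' \ S, f S' ≤ f (insert a (S'.erase b)))
    {S' : Finset α} (hcard : #S' = #S) : f S' ≤ f S := by
  induction hn : #(S \ S') using Nat.strong_induction_on generalizing S' with
  | _ n ih =>
  by_cases hS : S' = S
  · rw [hS]
  obtain ⟨a, ha, b, hb, hle⟩ := hex S' hcard hS
  obtain ⟨haS, haS'⟩ := mem_sdiff.1 ha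
  obtain ⟨hbS', hbS⟩ := mem_sdiff.1 hb
  have hcard' : #(insert a (S'.erase b)) = #S := by
    rw [card_insert_of_notMem fun h => haS' (mem_of_mem_erase h), card_erase_of_mem hbS',
      Nat.sub_add_cancel (card_pos.2 ⟨b, hbS'⟩), hcard]
  refine hle.trans (ih _ ?_ hcard' rfl)
  rw [sdiff_insert_erase_eq hbS, card_erase_of_mem ha, ← hn]
  exact Nat.sub_lt (card_pos.2 ⟨a, ha⟩) one_pos

end Exchange

section Economy

variable {Θ M : Type*} [DecidableEq M]

lemma sum_xg [Fintype M] (m : Θ → M) (S : Finset Θ) : ∑ g, xg m S g = #S :=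
  (card_eq_sum_card_fiberwise fun θ _ => mem_univ (m θ)).symm

lemma exists_mem_of_xg_lt (m : Θ → M) {S T : Finset Θ} {g : M} (h : xg m T g < xg m S g) :
    ∃ θ ∈ S, θ ∉ T ∧ m θ = g := by
  obtain ⟨θ, hθS, hθT⟩ := exists_mem_notMem_of_card_lt_card h
  rw [mem_filter] at hθS hθT
  exact ⟨θ, hθS.1, fun h => hθT ⟨h, hθS.2⟩, hθS.2⟩

lemma exists_xg_lt_of_card_eq [Fintype M] (m : Θ → M) {S S' : Finset Θ} {g' : M}
    (hcard : #S' = #S) (hg' : xg m S g' < xg m S' g') : ∃ g, xg m S' g < xg m S g := by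
  by_contra! hle
  have := sum_lt_sum (fun g _ => hle g) ⟨g', mem_univ g', hg'⟩
  rw [sum_xg, sum_xg] at this
  omega

def marginalGain (h : ℝ → ℝ) (s : Θ → ℝ) (u : M → ℕ → ℝ) (m : Θ → M) (T : Finset Θ) (θ : Θ) :
    ℝ :=
  h (s θ) + (u (m θ) (xg m T (m θ) + 1) - u (m θ) (xg m T (m θ)))

lemma marginalGain_anti {h : ℝ → ℝ} {s : Θ → ℝ} {u : M → ℕ → ℝ} {m : Θ → M}
    (hu : ∀ g x, u g (x + 2) - u g (x + 1) ≤ u g (x + 1) - u g x)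
    {T T' : Finset Θ} {θ : Θ} (hT : xg m T' (m θ) ≤ xg m T (m θ)) :
    marginalGain h s u m T θ ≤ marginalGain h s u m T' θ := by
  have := antitone_nat_of_succ_le (f := fun x => u (m θ) (x + 1) - u (m θ) x) (hu (m θ)) hT
  simp only [marginalGain]
  linarith

variable [DecidableEq Θ] (m : Θ → M)

lemma xg_insert_of_notMem {T : Finset Θ} {θ : Θ} (hθ : θ ∉ T) (g : M) :
    xg m (insert θ T) g = xg m T g + if m θ = g then 1 else 0 := by
  unfold xg
  rw [filter_insert]
  split_ifs
  · exact card_insert_of_notMem fun h => hθ (mem_of_mem_filter θ h)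
  · rfl

lemma xg_erase_add_one {S : Finset Θ} {θ : Θ} (hθ : θ ∈ S) :
    xg m (S.erase θ) (m θ) + 1 = xg m S (m θ) := by
  simpa [insert_erase hθ] using (xg_insert_of_notMem m (notMem_erase θ S) (m θ)).symm

lemma xg_erase_of_ne (S : Finset Θ) {θ : Θ} {g : M} (hg : m θ ≠ g) :
    xg m (S.erase θ) g = xg m S g := by
  unfold xg
  rw [filter_erase, erase_eq_of_notMem]
  simp [hg]

variable (h : ℝ → ℝ) (s : Θ → ℝ) (u : M → ℕ → ℝ)

lemma W_insert [Fintype M] {T : Finset Θ} {θ : Θ} (hθ : θ ∉ T) :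
    W h s u m (insert θ T) = W h s u m T + marginalGain h s u m T θ := by
  have hu : ∑ g, u g (xg m (insert θ T) g) - ∑ g, u g (xg m T g) =
      u (m θ) (xg m T (m θ) + 1) - u (m θ) (xg m T (m θ)) := by
    rw [← sum_sub_distrib, Fintype.sum_eq_single (m θ)]
    · simp [xg_insert_of_notMem m hθ]
    · intro g hg
      simp [xg_insert_of_notMem m hθ, Ne.symm hg]
  simp only [W, marginalGain, sum_insert hθ]
  linarith

lemma W_le_W_insert_erase [Fintype M] {S' : Finset Θ} {a b : Θ} (ha : a ∉ S') (hb : b ∈ S')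
    (hgain : marginalGain h s u m (S'.erase b) b ≤ marginalGain h s u m (S'.erase b) a) :
    W h s u m S' ≤ W h s u m (insert a (S'.erase b)) := by
  conv_lhs => rw [← insert_erase hb]
  rw [W_insert m h s u (notMem_erase b S'), W_insert m h s u fun h => ha (mem_of_mem_erase h)]
  linarith

lemma marginalGain_erase_self {S : Finset Θ} {θ : Θ} (hθ : θ ∈ S) :
    marginalGain h s u m (S.erase θ) θ =
      h (s θ) + (u (m θ) (xg m S (m θ)) - u (m θ) (xg m S (m θ) - 1)) := by
  rw [marginalGain, ← xg_erase_add_one m hθ, Nat.add_sub_cancel]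

variable {h s u m}

lemma ImplementedByAPM.exists_exchange [Fintype M] (hs01 : ∀ θ, s θ ∈ Set.Icc (0 : ℝ) 1)
    (hh : StrictMonoOn h (Set.Icc (0 : ℝ) 1))
    (hu : ∀ g x, u g (x + 2) - u g (x + 1) ≤ u g (x + 1) - u g x)
    {S S' : Finset Θ} (hS : ImplementedByAPM h s u m S) (hcard : #S' = #S) (hne : S' ≠ S) :
    ∃ a ∈ S \ S', ∃ b ∈ S' \ S,
      marginalGain h s u m (S'.erase b) b ≤ marginalGain h s u m (S'.erase b) a := by
  by_cases hgrow : ∃ g, xg m S g < xg m S' g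
  · obtain ⟨g', hg'⟩ := hgrow
    obtain ⟨g, hg⟩ := exists_xg_lt_of_card_eq m hcard hg'
    obtain ⟨b, hbS', hbS, rfl⟩ := exists_mem_of_xg_lt m hg'
    obtain ⟨a, haS, haS', rfl⟩ := exists_mem_of_xg_lt m hg
    have hab : m b ≠ m a := fun e => by rw [e] at hg'; omega
    refine ⟨a, mem_sdiff.2 ⟨haS, haS'⟩, b, mem_sdiff.2 ⟨hbS', hbS⟩, ?_⟩
    have hb_count := xg_erase_add_one m hbS'
    have ha_count := xg_erase_add_one m haS
    calc marginalGain h s u m (S'.erase b) b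
        ≤ marginalGain h s u m S b := marginalGain_anti hu (by omega)
      _ ≤ marginalGain h s u m (S.erase a) a := by
        rw [marginalGain_erase_self m h s u haS]
        exact hS.2 a haS b hbS hab
      _ ≤ marginalGain h s u m (S'.erase b) a := by
        refine marginalGain_anti hu ?_
        rw [xg_erase_of_ne m S' hab]
        omega
  · push Not at hgrow
    obtain ⟨b, hbS', hbS⟩ : ∃ b ∈ S', b ∉ S := by
      by_contra! hsub
      exact hne (eq_of_subset_of_card_le hsub hcard.ge)
    have hb_count := xg_erase_add_one m hbS'
    obtain ⟨a, haS, haT, hab⟩ :=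
      exists_mem_of_xg_lt m (S := S) (T := S'.erase b) (g := m b) (by have := hgrow (m b); omega)
    have haS' : a ∉ S' := fun h => haT (mem_erase.2 ⟨ne_of_mem_of_not_mem haS hbS, h⟩)
    refine ⟨a, mem_sdiff.2 ⟨haS, haS'⟩, b, mem_sdiff.2 ⟨hbS', hbS⟩, ?_⟩
    have hhs := hh (hs01 b) (hs01 a) (hS.1 a haS b hbS hab.symm)
    simp only [marginalGain, hab]
    linarith

end Economy

theorem stmt_11_general {Θ M : Type*} [DecidableEq Θ] [Fintype M] [DecidableEq M]
    (s : Θ → ℝ) (hs01 : ∀ θ, s θ ∈ Set.Icc (0:ℝ) 1)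
    (m : Θ → M) (q : ℕ)
    (h : ℝ → ℝ) (hh : StrictMonoOn h (Set.Icc (0:ℝ) 1))
    (u : M → ℕ → ℝ)
    (hu : ∀ g x, u g (x+2) - u g (x+1) ≤ u g (x+1) - u g x)
    (S : Finset Θ) (hScard : S.card = q)
    (hS : ImplementedByAPM h s u m S) :
    ∀ S' : Finset Θ, S'.card = q → W h s u m S' ≤ W h s u m S := by
  intro S' hS'card
  refine le_of_exchange (W h s u m) S (fun S' hcard hne => ?_) (hS'card.trans hScard.symm)
  obtain ⟨a, ha, b, hb, hgain⟩ := hS.exists_exchange hs01 hh hu hcard hne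
  exact ⟨a, ha, b, hb, W_le_W_insert_erase m h s u (mem_sdiff.1 ha).2 (mem_sdiff.1 hb).1 hgain⟩

/-- If `S ⊆ Θ` with `|S| = q` is implemented by the optimal APM `A*`, then `S`
maximizes `W` among all subsets of Θ of cardinality `q`. -/
theorem stmt_11 {Θ M : Type*} [Fintype Θ] [DecidableEq Θ] [Fintype M] [DecidableEq M]
    (s : Θ → ℝ) (hs : Function.Injective s) (hs01 : ∀ θ, s θ ∈ Set.Icc (0:ℝ) 1)
    (m : Θ → M) (q : ℕ) (hq : q ≤ Fintype.card Θ)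
    (h : ℝ → ℝ) (hh : StrictMonoOn h (Set.Icc (0:ℝ) 1))
    (u : M → ℕ → ℝ)
    (hu : ∀ g x, u g (x+2) - u g (x+1) ≤ u g (x+1) - u g x)
    (S : Finset Θ) (hScard : S.card = q)
    (hS : ImplementedByAPM h s u m S) :
    ∀ S' : Finset Θ, S'.card = q → W h s u m S' ≤ W h s u m S :=
  stmt_11_general s hs01 m q h hh u hu S hScard hS
end
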